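/- Let L ≥ 1, β > 0, and let γ_1 ≥ γ_2 ≥ … ≥ γ_L > 0. Let β_j ≥ 0 and p_j ≥ 0 for j = 1,…,L, with β_j · p_j > 0 for at least one j. Define R(ρ) := Σ_{j=1}^L β_j · log(1 + p_j · f(γ_j,β,ρ)) for ρ > 0. Then for every ρ > 0, writing g := g(β,ρ), g'(ρ) := −g·(1+g)²/(β + ρ·(1+g)²) and f_j := f(γ_j,β,ρ), the function R is differentiable at ρ with derivative R'(ρ) = (2·(1/g + 1)/(1 + (ρ/β)·(1+g)²)²) · g'(ρ) · Σ_{j=1}^L (β_j · p_j · f_j²/(1 + p_j · f_j)) · (ρ/β − 1/γ_j). -/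

import Mathlib

/-- The deterministic equivalent `g(β,ρ)`: the unique positive solution of
`g·(ρ + β/(1+g)) = 1`, given in closed form. -/
noncomputable def gfun (β ρ : ℝ) : ℝ :=
  ((1 - ρ - β) + Real.sqrt ((ρ + β - 1) ^ 2 + 4 * ρ)) / (2 * ρ)

/-- The limiting SINR coefficient `f(γ,β,ρ)` at effective SNR γ. -/
noncomputable def ffun (γ β ρ : ℝ) : ℝ :=
  gfun β ρ * (γ + (γ * ρ / β) * (1 + gfun β ρ) ^ 2) / (γ + (1 + gfun β ρ) ^ 2)

/-!
`g(β,·)` is a root of the quadratic `ρ g² + (ρ + β - 1) g - 1`, so differentiating that identity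
gives `g'(ρ)` implicitly. Substituting `g'` into the quotient rule for `f(γ,β,·)` yields
`f' = C · g' · f² · (ρ/β - 1/γ)` with a factor `C` independent of `γ`, and the chain rule for
`log (1 + p f)` then gives the derivative of the sum rate term by term.
-/

lemma gfun_pos (β : ℝ) {ρ : ℝ} (hρ : 0 < ρ) : 0 < gfun β ρ := by
  have hlt : ρ + β - 1 < Real.sqrt ((ρ + β - 1) ^ 2 + 4 * ρ) :=
    Real.lt_sqrt_of_sq_lt (by linarith)
  exact div_pos (by linarith) (by positivity)

lemma gfun_quadratic (β : ℝ) {ρ : ℝ} (hρ : 0 < ρ) :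
    ρ * gfun β ρ ^ 2 + (ρ + β - 1) * gfun β ρ - 1 = 0 := by
  unfold gfun
  have hs := Real.sq_sqrt (show 0 ≤ (ρ + β - 1) ^ 2 + 4 * ρ by positivity)
  generalize Real.sqrt ((ρ + β - 1) ^ 2 + 4 * ρ) = s at hs ⊢
  field_simp
  linear_combination hs

lemma differentiableAt_gfun (β : ℝ) {ρ : ℝ} (hρ : 0 < ρ) : DifferentiableAt ℝ (gfun β) ρ := by
  unfold gfun
  fun_prop (disch := positivity)

lemma hasDerivAt_gfun {β ρ : ℝ} (hβ : 0 < β) (hρ : 0 < ρ) :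
    HasDerivAt (gfun β)
      (-(gfun β ρ * (1 + gfun β ρ) ^ 2) / (β + ρ * (1 + gfun β ρ) ^ 2)) ρ := by
  have hg := (differentiableAt_gfun β hρ).hasDerivAt
  set d := deriv (gfun β) ρ
  set g := gfun β ρ
  have hquad_deriv : HasDerivAt (fun r => r * gfun β r ^ 2 + (r + β - 1) * gfun β r - 1)
      ((1 * g ^ 2 + ρ * (2 * g ^ 1 * d)) + (1 * g + (ρ + β - 1) * d)) ρ :=
    (((hasDerivAt_id' ρ).fun_mul (hg.fun_pow 2)).fun_add
      ((((hasDerivAt_id' ρ).add_const β).sub_const 1).fun_mul hg)).sub_const 1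
  have hquad_const : (fun r => r * gfun β r ^ 2 + (r + β - 1) * gfun β r - 1) =ᶠ[nhds ρ]
      fun _ => 0 := by
    filter_upwards [eventually_gt_nhds hρ] with r hr using gfun_quadratic β hr
  have himplicit := hquad_deriv.unique ((hasDerivAt_const ρ 0).congr_of_eventuallyEq hquad_const)
  have hg_pos : 0 < g := gfun_pos β hρ
  suffices d = -(g * (1 + g) ^ 2) / (β + ρ * (1 + g) ^ 2) from this ▸ hg
  rw [eq_div_iff (by positivity)]
  linear_combination (1 + g) * himplicit - d * gfun_quadratic β hρ

lemma ffun_pos {γ β ρ : ℝ} (hγ : 0 < γ) (hβ : 0 < β) (hρ : 0 < ρ) : 0 < ffun γ β ρ := by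
  have := gfun_pos β hρ
  unfold ffun
  positivity

lemma hasDerivAt_ffun {γ β ρ : ℝ} (hγ : 0 < γ) (hβ : 0 < β) (hρ : 0 < ρ) :
    HasDerivAt (ffun γ β)
      ((2 * (1 / gfun β ρ + 1) / (1 + (ρ / β) * (1 + gfun β ρ) ^ 2) ^ 2) *
        (-(gfun β ρ * (1 + gfun β ρ) ^ 2) / (β + ρ * (1 + gfun β ρ) ^ 2)) *
        ffun γ β ρ ^ 2 * (ρ / β - 1 / γ)) ρ := by
  have hg := hasDerivAt_gfun hβ hρ
  have hg_pos := gfun_pos β hρ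
  have hsq := (hg.const_add 1).fun_pow 2
  have hquot := (hg.fun_mul ((((hasDerivAt_id' ρ).const_mul γ).div_const β).fun_mul hsq
    |>.const_add γ)).fun_div (hsq.const_add γ) (by positivity)
  refine hquot.congr_deriv ?_
  unfold ffun
  field_simp
  ring

theorem sumRate_hasDerivAt_general (L : ℕ) (β : ℝ) (hβ : 0 < β)
    (γ : Fin L → ℝ) (hγpos : ∀ j, 0 < γ j)
    (βv p : Fin L → ℝ) (hp : ∀ j, 0 ≤ p j)
    (ρ : ℝ) (hρ : 0 < ρ) :
    HasDerivAt (fun r => ∑ j, βv j * Real.log (1 + p j * ffun (γ j) β r))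
      ((2 * (1 / gfun β ρ + 1) / (1 + (ρ / β) * (1 + gfun β ρ) ^ 2) ^ 2) *
        (-(gfun β ρ * (1 + gfun β ρ) ^ 2) / (β + ρ * (1 + gfun β ρ) ^ 2)) *
        ∑ j, (βv j * p j * (ffun (γ j) β ρ) ^ 2 / (1 + p j * ffun (γ j) β ρ)) *
          (ρ / β - 1 / γ j)) ρ := by
  have hterm (j : Fin L) := ((((hasDerivAt_ffun (hγpos j) hβ hρ).const_mul (p j)).const_add 1).log
    (by nlinarith [hp j, ffun_pos (hγpos j) hβ hρ])).const_mul (βv j)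
  refine (HasDerivAt.fun_sum fun j _ => hterm j).congr_deriv ?_
  rw [Finset.mul_sum]
  refine Finset.sum_congr rfl fun j _ => ?_
  ring

/-- With R(ρ) := Σ_j β_j·log(1 + p_j·f(γ_j,β,ρ)), for every
ρ > 0, writing g := g(β,ρ), g'(ρ) := −g(1+g)²/(β+ρ(1+g)²) and f_j := f(γ_j,β,ρ),
R is differentiable at ρ with derivative
R'(ρ) = (2(1/g+1)/(1+(ρ/β)(1+g)²)²)·g'(ρ)·Σ_j (β_j p_j f_j²/(1+p_j f_j))·(ρ/β − 1/γ_j). -/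
theorem sumRate_hasDerivAt (L : ℕ) (hL : 1 ≤ L) (β : ℝ) (hβ : 0 < β)
    (γ : Fin L → ℝ) (hγpos : ∀ j, 0 < γ j)
    (hγsorted : ∀ i j : Fin L, i ≤ j → γ j ≤ γ i)
    (βv p : Fin L → ℝ) (hβv : ∀ j, 0 ≤ βv j) (hp : ∀ j, 0 ≤ p j)
    (hex : ∃ j, 0 < βv j * p j)
    (ρ : ℝ) (hρ : 0 < ρ) :
    HasDerivAt (fun r => ∑ j, βv j * Real.log (1 + p j * ffun (γ j) β r))
      ((2 * (1 / gfun β ρ + 1) / (1 + (ρ / β) * (1 + gfun β ρ) ^ 2) ^ 2) *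
        (-(gfun β ρ * (1 + gfun β ρ) ^ 2) / (β + ρ * (1 + gfun β ρ) ^ 2)) *
        ∑ j, (βv j * p j * (ffun (γ j) β ρ) ^ 2 / (1 + p j * ffun (γ j) β ρ)) *
          (ρ / β - 1 / γ j)) ρ :=
  sumRate_hasDerivAt_general L β hβ γ hγpos βv p hp ρ hρ
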